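/- As formal power series over the integers (or as convergent products for |q| < 1), the infinite product ∏_{k≥1} 1/(1+q^k) equals ∏_{k≥0} (1 − q^{2k+1}). -/

import Mathlib

/-!
Write `A = ∏ (1 + q^(k+1))`, `P = ∏ (1 - q^(k+1))`, and `O`, `E` for the subproducts of `P` over
odd and even exponents. Since `(1 + x)(1 - x) = 1 - x²`, `A · P = E`; splitting `P` by parity,
`O · E = P`. Hence `A · O · E = E`, and as `E ≠ 0` (absolute convergence), `A · O = 1`.
-/

lemma tprod_one_add_ne_zero_of_norm_lt_one {ι R : Type*} [NormedCommRing R] [NormOneClass R]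
    [NormMulClass R] [CompleteSpace R] {f : ι → R} (hf : Summable (‖f ·‖))
    (hf_lt : ∀ k, ‖f k‖ < 1) : ∏' k, (1 + f k) ≠ 0 := by
  refine tprod_one_add_ne_zero_of_summable (fun k h => ?_) hf
  have : f k = -1 := eq_neg_of_add_eq_zero_right h
  simpa [this] using hf_lt k

section PowerProducts

variable {K : Type*} [NormedField K] {q : K}

lemma summable_norm_pow_comp (hq : ‖q‖ < 1) {e : ℕ → ℕ} (he : ∀ k, k ≤ e k) :
    Summable fun k => ‖q ^ e k‖ :=
  (summable_geometric_of_lt_one (norm_nonneg q) hq).of_nonneg_of_le (fun _ => norm_nonneg _)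
    fun k => (norm_pow q (e k)).trans_le (pow_le_pow_of_le_one (norm_nonneg q) hq.le (he k))

lemma norm_pow_comp_lt_one (hq : ‖q‖ < 1) {e : ℕ → ℕ} (he : ∀ k, k < e k) (k : ℕ) :
    ‖q ^ e k‖ < 1 := by
  rw [norm_pow]
  exact pow_lt_one₀ (norm_nonneg q) hq (Nat.ne_zero_of_lt (he k))

variable [CompleteSpace K]

lemma multipliable_one_add_pow_comp (hq : ‖q‖ < 1) {e : ℕ → ℕ} (he : ∀ k, k ≤ e k) :
    Multipliable fun k => 1 + q ^ e k :=
  multipliable_one_add_of_summable (summable_norm_pow_comp hq he)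

lemma multipliable_one_sub_pow_comp (hq : ‖q‖ < 1) {e : ℕ → ℕ} (he : ∀ k, k ≤ e k) :
    Multipliable fun k => 1 - q ^ e k := by
  simpa only [sub_eq_add_neg] using
    multipliable_one_add_of_summable (f := fun k => -q ^ e k)
      (by simpa only [norm_neg] using summable_norm_pow_comp hq he)

lemma tprod_one_add_pow_comp_ne_zero (hq : ‖q‖ < 1) {e : ℕ → ℕ} (he : ∀ k, k < e k) :
    ∏' k, (1 + q ^ e k) ≠ 0 :=
  tprod_one_add_ne_zero_of_norm_lt_one (summable_norm_pow_comp hq fun k => (he k).le)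
    (norm_pow_comp_lt_one hq he)

lemma tprod_one_sub_pow_comp_ne_zero (hq : ‖q‖ < 1) {e : ℕ → ℕ} (he : ∀ k, k < e k) :
    ∏' k, (1 - q ^ e k) ≠ 0 := by
  simpa only [sub_eq_add_neg] using
    tprod_one_add_ne_zero_of_norm_lt_one (f := fun k => -q ^ e k)
      (by simpa only [norm_neg] using summable_norm_pow_comp hq fun k => (he k).le)
      (by simpa only [norm_neg] using norm_pow_comp_lt_one hq he)

lemma tprod_one_add_pow_mul_tprod_one_sub_pow (hq : ‖q‖ < 1) :
    (∏' k : ℕ, (1 + q ^ (k + 1))) * ∏' k : ℕ, (1 - q ^ (k + 1)) =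
      ∏' k : ℕ, (1 - q ^ (2 * k + 2)) := by
  rw [← (multipliable_one_add_pow_comp hq (by omega)).tprod_mul
    (multipliable_one_sub_pow_comp hq (by omega))]
  exact tprod_congr fun k => by ring

lemma tprod_one_sub_pow_odd_mul_tprod_one_sub_pow_even (hq : ‖q‖ < 1) :
    (∏' k : ℕ, (1 - q ^ (2 * k + 1))) * ∏' k : ℕ, (1 - q ^ (2 * k + 2)) =
      ∏' k : ℕ, (1 - q ^ (k + 1)) :=
  tprod_even_mul_odd (f := fun n => 1 - q ^ (n + 1))
    (multipliable_one_sub_pow_comp hq (by omega)) (multipliable_one_sub_pow_comp hq (by omega))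

lemma tprod_one_add_pow_mul_tprod_one_sub_pow_odd (hq : ‖q‖ < 1) :
    (∏' k : ℕ, (1 + q ^ (k + 1))) * ∏' k : ℕ, (1 - q ^ (2 * k + 1)) = 1 := by
  refine mul_right_cancel₀ (tprod_one_sub_pow_comp_ne_zero hq (e := fun k => 2 * k + 2)
    (by omega)) ?_
  rw [one_mul, mul_assoc, tprod_one_sub_pow_odd_mul_tprod_one_sub_pow_even hq,
    tprod_one_add_pow_mul_tprod_one_sub_pow hq]

theorem tprod_inv_one_add_pow_eq_tprod_one_sub_pow_odd (hq : ‖q‖ < 1) :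
    ∏' k : ℕ, (1 + q ^ (k + 1))⁻¹ = ∏' k : ℕ, (1 - q ^ (2 * k + 1)) := by
  rw [(multipliable_one_add_pow_comp hq (by omega)).tprod_inv₀
    (tprod_one_add_pow_comp_ne_zero hq (by omega))]
  exact inv_eq_of_mul_eq_one_right (tprod_one_add_pow_mul_tprod_one_sub_pow_odd hq)

end PowerProducts

theorem stmt_4 (q : ℂ) (hq : ‖q‖ < 1) :
    (∏' k : ℕ, (1 + q ^ (k + 1))⁻¹) = ∏' k : ℕ, (1 - q ^ (2 * k + 1)) :=
  tprod_inv_one_add_pow_eq_tprod_one_sub_pow_odd hq
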